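/- The image of the polynomial p(x,y) = [x,y]² = (xy − yx)², evaluated on the real quaternion algebra ℍ, is exactly the set {r·1 : r ∈ ℝ, r ≤ 0} of nonpositive scalar quaternions: every value (xy−yx)² is a nonpositive real scalar, and every nonpositive real scalar is attained. -/

import Mathlib

/-!
A commutator `[x, y]` has zero real part, since `re (x * y) = re (y * x)`, and a pure quaternion
`c` satisfies `c ^ 2 = -normSq c`; so `[x, y] ^ 2` is a nonpositive scalar. Conversely
`[i, t j] = 2t k` squares to `-4t²`, which reaches every nonpositive real.
-/

open Quaternion

namespace QuaternionAlgebra.Basis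

variable {R A : Type*} [CommRing R] [Ring A] [Algebra R A] {c₁ c₃ : R} (q : Basis A c₁ 0 c₃)

theorem commutator_i_j : q.i * q.j - q.j * q.i = (2 : R) • q.k := by
  rw [i_mul_j, j_mul_i, zero_smul, zero_sub, sub_neg_eq_add, two_smul]

theorem sq_commutator_i_smul_j (t : R) :
    (q.i * (t • q.j) - t • q.j * q.i) ^ 2 = algebraMap R A (-(4 * c₁ * c₃ * t ^ 2)) := by
  rw [mul_smul_comm, smul_mul_assoc, ← smul_sub, commutator_i_j, smul_smul, sq, smul_mul_smul,
    k_mul_k, smul_neg, smul_smul, map_neg, Algebra.algebraMap_eq_smul_one]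
  ring_nf

end QuaternionAlgebra.Basis

namespace Quaternion

theorem re_mul_comm {R : Type*} [CommRing R] (a b : ℍ[R]) : (a * b).re = (b * a).re := by
  simp only [re_mul]
  ring

theorem re_commutator {R : Type*} [CommRing R] (a b : ℍ[R]) : (a * b - b * a).re = 0 := by
  rw [re_sub, re_mul_comm, sub_self]

theorem sq_commutator {R : Type*} [CommRing R] [LinearOrder R] [IsStrictOrderedRing R]
    (a b : ℍ[R]) : (a * b - b * a) ^ 2 = -normSq (a * b - b * a) :=
  sq_eq_neg_normSq.mpr (re_commutator a b)

end Quaternion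

/-- The image of `p(x,y) = [x,y]²` on the real quaternions is exactly the set
of nonpositive scalar quaternions. -/
theorem image_commutator_sq_quaternion :
    {q : ℍ[ℝ] | ∃ x y : ℍ[ℝ], q = (x * y - y * x) ^ 2} =
      {q : ℍ[ℝ] | ∃ r : ℝ, r ≤ 0 ∧ q = (r : ℍ[ℝ])} := by
  ext q
  constructor
  · rintro ⟨x, y, rfl⟩
    refine ⟨-normSq (x * y - y * x), neg_nonpos.mpr normSq_nonneg, ?_⟩
    rw [sq_commutator, coe_neg]
  · rintro ⟨r, hr, rfl⟩
    let b : QuaternionAlgebra.Basis ℍ[ℝ] (-1 : ℝ) 0 (-1) := QuaternionAlgebra.Basis.self ℝ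
    refine ⟨b.i, (√(-r) / 2) • b.j, ?_⟩
    rw [b.sq_commutator_i_smul_j, algebraMap_def, div_pow, Real.sq_sqrt (neg_nonneg.mpr hr)]
    congr 1
    ring
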